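/- arXiv:2504.05256 — 3 statements merged into one kernel-verified Lean document; each statement's English description precedes it below -/
import Mathlib

section
/- For every monomial element x^Λ Δ_k in the base subgroup B_k of W_n, there exists a monic monomial element w in W_n such that the commutator [x^Λ Δ_k, w] lies in B_k and pdeg([x^Λ Δ_k, w]) = pdeg(x^Λ Δ_k) - 1. -/
open Equiv MvPolynomial
open scoped commutatorElement

namespace Wreath

variable (p n : ℕ)

/-- The set of `pⁿ` points on which `W n` acts. -/
abbrev Pts := Fin n → ZMod p

/-- Truncation of a point: keep coordinates below `k`, zero out the rest. -/
def trunc (k : Fin n) (x : Pts p n) : Pts p n := fun j => if j < k then x j else 0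

lemma trunc_update (k : Fin n) (x : Pts p n) (v : ZMod p) :
    trunc p n k (Function.update x k v) = trunc p n k x := by
  funext j
  by_cases hj : j < k
  · simp [trunc, Function.update_of_ne (ne_of_lt hj), hj]
  · simp [trunc, hj]

/-- The permutation `FΔₖ` of `𝔽_pⁿ` sending `x` to `x - F(x₁,…,x_{k-1}) eₖ`. -/
def delta (k : Fin n) (F : Pts p n → ZMod p) : Equiv.Perm (Pts p n) where
  toFun x := Function.update x k (x k - F (trunc p n k x))
  invFun x := Function.update x k (x k + F (trunc p n k x))
  left_inv x := by
    simp only [trunc_update, Function.update_idem, Function.update_self,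
      sub_add_cancel, Function.update_eq_self]
  right_inv x := by
    simp only [trunc_update, Function.update_idem, Function.update_self,
      add_sub_cancel_right, Function.update_eq_self]

/-- A permutation of `𝔽_pⁿ` is triangular if the displacement of the `k`-th coordinate
only depends on the coordinates below `k`.  The triangular permutations form exactly the
iterated wreath product `W_n = ≀ⁿ 𝔽_p`, a Sylow `p`-subgroup of `Sym(pⁿ)`. -/
def Triangular (π : Equiv.Perm (Pts p n)) : Prop :=
  ∀ (k : Fin n) (x y : Pts p n), (∀ j : Fin n, j < k → x j = y j) →
    π x k - x k = π y k - y k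

lemma Triangular.agree {π : Equiv.Perm (Pts p n)} (hπ : Triangular p n π) {k : Fin n}
    {x y : Pts p n} (h : ∀ j : Fin n, j < k → x j = y j) :
    ∀ j : Fin n, j < k → π x j = π y j := by
  intro j hj
  have h2 := hπ j x y (fun i hi => h i (hi.trans hj))
  rw [h j hj] at h2
  exact sub_left_inj.mp h2

lemma Triangular.mul {π σ : Equiv.Perm (Pts p n)} (hπ : Triangular p n π)
    (hσ : Triangular p n σ) : Triangular p n (π * σ) := by
  intro k x y h
  have h1 := hπ k (σ x) (σ y) (hσ.agree p n h)
  have h2 := hσ k x y h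
  simp only [Equiv.Perm.mul_apply]
  linear_combination h1 + h2

lemma Triangular.one : Triangular p n 1 := by
  intro k x y h
  simp [h k]

lemma Triangular.inv {π : Equiv.Perm (Pts p n)} (hπ : Triangular p n π) :
    Triangular p n π⁻¹ := by
  intro k x y h
  have key : ∀ m : ℕ, ∀ j : Fin n, (j : ℕ) ≤ m → j < k → π⁻¹ x j = π⁻¹ y j := by
    intro m
    induction m with
    | zero =>
      intro j hj hjk
      have hb : ∀ i : Fin n, i < j → π⁻¹ x i = π⁻¹ y i := by
        intro i hi
        have hi' : (i : ℕ) < (j : ℕ) := hi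
        omega
      have ht := hπ j (π⁻¹ x) (π⁻¹ y) hb
      simp only [Equiv.Perm.inv_def, Equiv.apply_symm_apply] at ht
      rw [h j hjk] at ht
      exact (sub_right_inj.mp ht)
    | succ m ih =>
      intro j hj hjk
      have hb : ∀ i : Fin n, i < j → π⁻¹ x i = π⁻¹ y i := by
        intro i hi
        have hi' : (i : ℕ) < (j : ℕ) := hi
        exact ih i (by omega) (hi.trans hjk)
      have ht := hπ j (π⁻¹ x) (π⁻¹ y) hb
      simp only [Equiv.Perm.inv_def, Equiv.apply_symm_apply] at ht
      rw [h j hjk] at ht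
      exact (sub_right_inj.mp ht)
  have hb : ∀ j : Fin n, j < k → π⁻¹ x j = π⁻¹ y j := fun j hj => key j j le_rfl hj
  have ht := hπ k (π⁻¹ x) (π⁻¹ y) hb
  simp only [Equiv.Perm.inv_def, Equiv.apply_symm_apply] at ht
  linear_combination -ht

/-- The subgroup of triangular permutations fixing every coordinate `j` satisfying `P j`. -/
def WB (P : Fin n → Prop) : Subgroup (Equiv.Perm (Pts p n)) where
  carrier := {π | Triangular p n π ∧ ∀ (x : Pts p n) (j : Fin n), P j → π x j = x j}
  one_mem' := ⟨Triangular.one p n, by intro x j _; simp⟩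
  mul_mem' := by
    rintro a b ⟨ha, ha'⟩ ⟨hb, hb'⟩
    refine ⟨ha.mul p n hb, ?_⟩
    intro x j hj
    simp only [Equiv.Perm.mul_apply]
    rw [ha' (b x) j hj, hb' x j hj]
  inv_mem' := by
    rintro a ⟨ha, ha'⟩
    refine ⟨ha.inv p n, ?_⟩
    intro x j hj
    have h := ha' (a⁻¹ x) j hj
    rw [Equiv.Perm.inv_def, Equiv.apply_symm_apply] at h
    exact h.symm

/-- `W p n = ≀ⁿ 𝔽_p` : the iterated wreath product, realized as the group of all
triangular permutations of `𝔽_pⁿ`. -/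
def W : Subgroup (Equiv.Perm (Pts p n)) := WB p n (fun _ => False)

/-- The `k`-th base subgroup `B_k` (elements `fΔₖ`, only the `k`-th coordinate moves). -/
def B (k : Fin n) : Subgroup (Equiv.Perm (Pts p n)) := WB p n (fun j => j ≠ k)

/-- The "tail" subgroup `B_{m+1} ⋯ B_n` (0-indexed: coordinates `< m` are fixed). -/
def Btail (m : ℕ) : Subgroup (Equiv.Perm (Pts p n)) := WB p n (fun j => (j : ℕ) < m)

/-- `γ_i(W_n)` (paper indexing: `γ₁ = W_n`), as a subgroup of `Perm (𝔽_pⁿ)`. -/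
def gammaP (i : ℕ) : Subgroup (Equiv.Perm (Pts p n)) :=
  Subgroup.map (W p n).subtype ((⊤ : Subgroup ↥(W p n)).lowerCentralSeries (i - 1))

/-- `Z_i(W_n)` (with `Z₀ = 1`), as a subgroup of `Perm (𝔽_pⁿ)`. -/
def ZP (i : ℕ) : Subgroup (Equiv.Perm (Pts p n)) :=
  Subgroup.map (W p n).subtype (upperCentralSeries ↥(W p n) i)

/-- The element `fΔₖ` of the base subgroup `B_k` attached to a polynomial `f`. -/
noncomputable def elt (f : MvPolynomial (Fin n) (ZMod p)) (k : Fin n) : Equiv.Perm (Pts p n) :=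
  delta p n k (fun t => eval t f)

/-- The monomial element `x^Λ Δₖ`. -/
noncomputable def monoElem (Λ : Fin n →₀ ℕ) (k : Fin n) : Equiv.Perm (Pts p n) :=
  elt p n (monomial Λ (1 : ZMod p)) k

/-- `pdeg(x^Λ) = Σ λⱼ pʲ` (coordinates 0-indexed). -/
def pdegM (Λ : Fin n →₀ ℕ) : ℕ := ∑ j : Fin n, Λ j * p ^ (j : ℕ)

/-- `μₖ = p^{n-1} - p^k` (0-indexed `k`). -/
def mu (k : Fin n) : ℕ := p ^ (n - 1) - p ^ (k : ℕ)

/-- `pdeg(x^Λ Δₖ) = pdeg(x^Λ) + μₖ`. -/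
def pdegMk (Λ : Fin n →₀ ℕ) (k : Fin n) : ℕ := pdegM p n Λ + mu p n k

/-- `pdeg(fΔₖ)`: maximum of the `pdeg` of the monomials of `f`, plus `μₖ`. -/
def pdegP (f : MvPolynomial (Fin n) (ZMod p)) (k : Fin n) : ℕ :=
  f.support.sup (pdegM p n) + mu p n k

/-- `f` is a reduced polynomial: every variable appears with degree at most `p - 1`. -/
def Reduced (f : MvPolynomial (Fin n) (ZMod p)) : Prop :=
  ∀ Λ ∈ f.support, ∀ j : Fin n, Λ j ≤ p - 1

/-- `f` only involves the variables `xⱼ` with `j < k`. -/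
def VarsLt (k : Fin n) (f : MvPolynomial (Fin n) (ZMod p)) : Prop :=
  ∀ Λ ∈ f.support, ∀ j : Fin n, Λ j ≠ 0 → j < k

/-- The normal closure of an element inside the group `W_n`: the smallest subgroup
containing `g` which is stable under conjugation by every element of `W_n`. -/
def normalClosureIn (g : Equiv.Perm (Pts p n)) : Subgroup (Equiv.Perm (Pts p n)) :=
  sInf {S | g ∈ S ∧ ∀ w ∈ W p n, ∀ s ∈ S, w * s * w⁻¹ ∈ S}

/-- The canonical elementary abelian regular subgroup `T = ⟨Δ₁, …, Δₙ⟩`. -/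
def T : Subgroup (Equiv.Perm (Pts p n)) :=
  Subgroup.closure (Set.range fun i : Fin n => delta p n i (fun _ => 1))

end Wreath

/-!
Let `xᵢ` be the least variable of `x^Λ = xᵢ^λ r` and take `w = x₀^{p-1} ⋯ x_{i-1}^{p-1} Δᵢ`.
By Fermat, the polynomial `e = x₀^{p-1} ⋯ x_{i-1}^{p-1}` of `w` is the indicator function of
`x₀ ⋯ x_{i-1} ≠ 0`, an idempotent. Commuting `x^Λ Δₖ` with `w` substitutes `xᵢ ↦ xᵢ + e` in
`x^Λ`, so the commutator is `(xᵢ^λ - (xᵢ + e)^λ) r Δₖ = -∑_{m<λ} C(λ,m) e xᵢ^m r Δₖ`.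
This is reduced, and its monomial of largest `pdeg` is `e xᵢ^{λ-1} r`, with coefficient
`-λ ≠ 0`, of `pdeg` equal to `(p^i - 1) + (λ - 1) p^i + pdeg r = pdeg x^Λ - 1`.
-/

lemma Finsupp.exists_ne_zero_forall_lt_eq_zero {ι M : Type*} [LinearOrder ι] [Zero M]
    {f : ι →₀ M} (hf : f ≠ 0) : ∃ i, f i ≠ 0 ∧ ∀ j < i, f j = 0 := by
  have hs := Finsupp.support_nonempty_iff.mpr hf
  refine ⟨f.support.min' hs, Finsupp.mem_support_iff.mp (f.support.min'_mem hs), fun j hj => ?_⟩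
  by_contra h
  exact (f.support.min'_le j (Finsupp.mem_support_iff.mpr h)).not_gt hj

lemma IsIdempotentElem.add_pow_sub_pow {R : Type*} [CommRing R] {e : R} (he : IsIdempotentElem e)
    (a : R) (l : ℕ) : (a + e) ^ l - a ^ l = e * ∑ m ∈ Finset.range l, (l.choose m : R) * a ^ m := by
  rw [add_pow, Finset.sum_range_succ, Finset.mul_sum, Nat.sub_self, pow_zero, Nat.choose_self]
  simp only [Nat.cast_one, mul_one, add_sub_cancel_right]
  refine Finset.sum_congr rfl fun m hm => ?_
  rw [he.pow_eq (Nat.sub_ne_zero_of_lt (Finset.mem_range.mp hm))]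
  ring

lemma ZMod.isIdempotentElem_pow_sub_one {p : ℕ} [Fact p.Prime] (a : ZMod p) :
    IsIdempotentElem (a ^ (p - 1)) := by
  rcases eq_or_ne a 0 with rfl | ha
  · rw [zero_pow (Nat.sub_ne_zero_of_lt (Fact.out : p.Prime).one_lt)]; exact .zero
  · rw [ZMod.pow_card_sub_one_eq_one ha]; exact .one

namespace Wreath

open Finset Function

variable {p n : ℕ}

def DependsBelow (k : Fin n) (F : Pts p n → ZMod p) : Prop :=
  ∀ x y : Pts p n, (∀ j < k, x j = y j) → F x = F y

lemma DependsBelow.apply_trunc {k : Fin n} {F : Pts p n → ZMod p} (hF : DependsBelow k F)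
    (x : Pts p n) : F (trunc p n k x) = F x :=
  hF _ _ fun j hj => by simp [trunc, hj]

lemma delta_apply_of_dependsBelow {k : Fin n} {F : Pts p n → ZMod p} (hF : DependsBelow k F)
    (x : Pts p n) : delta p n k F x = update x k (x k - F x) := by
  rw [← hF.apply_trunc]; rfl

lemma delta_inv_apply_of_dependsBelow {k : Fin n} {F : Pts p n → ZMod p}
    (hF : DependsBelow k F) (x : Pts p n) :
    (delta p n k F)⁻¹ x = update x k (x k + F x) := by
  rw [← hF.apply_trunc]; rfl

lemma commutator_delta_delta {i k : Fin n} (hik : i < k) {F G : Pts p n → ZMod p}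
    (hF : DependsBelow k F) (hG : DependsBelow i G) :
    ⁅delta p n k F, delta p n i G⁆ =
      delta p n k fun x => F x - F (update x i (x i + G x)) := by
  have hFG : DependsBelow k fun x => F x - F (update x i (x i + G x)) := by
    intro x y h
    dsimp only
    have hGxy : G x = G y := hG x y fun j hj => h j (hj.trans hik)
    rw [hF x y h, h i hik, hGxy, hF (update x i _) (update y i _) fun j hj => ?_]
    by_cases hji : j = i
    · subst hji; simp
    · simp [update_of_ne hji, h j hj]
  ext x : 1
  set y := update x i (x i + G x) with hy
  have hGy : G (update y k (y k + F y)) = G x :=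
    hG _ _ fun j hj => by simp [y, update_of_ne hj.ne, update_of_ne (hj.trans hik).ne]
  have hFy : F (update x k (x k + F y)) = F x := hF _ _ fun j hj => by simp [update_of_ne hj.ne]
  simp only [commutatorElement_def, Perm.mul_apply, delta_inv_apply_of_dependsBelow hG,
    delta_inv_apply_of_dependsBelow hF, delta_apply_of_dependsBelow hG,
    delta_apply_of_dependsBelow hF, delta_apply_of_dependsBelow hFG, ← hy, hGy]
  have hz : update (update y k (y k + F y)) i (update y k (y k + F y) i - G x) =
      update x k (x k + F y) := by
    ext j
    rcases eq_or_ne j i with rfl | hji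
    · simp [hy, update_of_ne hik.ne]
    · rcases eq_or_ne j k with rfl | hjk
      · simp [hy, update_of_ne hik.ne']
      · simp [hy, update_of_ne hji, update_of_ne hjk]
  rw [hz, hFy, update_idem, update_self]
  congr 1
  ring

lemma eval_monomial_congr {Λ : Fin n →₀ ℕ} (c : ZMod p) {x y : Pts p n}
    (h : ∀ j, Λ j ≠ 0 → x j = y j) : eval x (monomial Λ c) = eval y (monomial Λ c) := by
  simp only [eval_monomial]
  congr 1
  exact Finset.prod_congr rfl fun j hj => by dsimp only; rw [h j (Finsupp.mem_support_iff.mp hj)]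

lemma dependsBelow_eval_monomial {Λ : Fin n →₀ ℕ} {k : Fin n} (hΛ : ∀ j, Λ j ≠ 0 → j < k)
    (c : ZMod p) : DependsBelow k fun x => eval x (monomial Λ c) :=
  fun _ _ h => eval_monomial_congr c fun j hj => h j (hΛ j hj)

lemma eval_monomial_eq_pow_mul_erase (Λ : Fin n →₀ ℕ) (i : Fin n) (x : Pts p n) :
    eval x (monomial Λ 1) = x i ^ Λ i * eval x (monomial (Λ.erase i) 1) := by
  conv_lhs => rw [← Finsupp.single_add_erase i Λ, ← one_mul (1 : ZMod p), ← monomial_mul,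
    ← X_pow_eq_monomial]
  rw [eval_mul, eval_pow, eval_X]

lemma pdegM_add (Λ Λ' : Fin n →₀ ℕ) : pdegM p n (Λ + Λ') = pdegM p n Λ + pdegM p n Λ' := by
  simp only [pdegM, Finsupp.add_apply, add_mul, sum_add_distrib]

lemma pdegM_single (i : Fin n) (m : ℕ) : pdegM p n (Finsupp.single i m) = m * p ^ (i : ℕ) := by
  simp [pdegM, Finsupp.single_apply]

lemma pdegM_eq_add_erase (Λ : Fin n →₀ ℕ) (i : Fin n) :
    pdegM p n Λ = Λ i * p ^ (i : ℕ) + pdegM p n (Λ.erase i) := by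
  conv_lhs => rw [← Finsupp.single_add_erase i Λ]
  rw [pdegM_add, pdegM_single]

variable (p) in
noncomputable def lowerExp (i : Fin n) : Fin n →₀ ℕ :=
  Finsupp.equivFunOnFinite.symm fun j => if j < i then p - 1 else 0

lemma lowerExp_apply (i j : Fin n) : lowerExp p i j = if j < i then p - 1 else 0 := rfl

lemma lowerExp_le (i j : Fin n) : lowerExp p i j ≤ p - 1 := by
  rw [lowerExp_apply]; split_ifs <;> omega

lemma lt_of_lowerExp_ne_zero {i j : Fin n} (h : lowerExp p i j ≠ 0) : j < i := by
  rw [lowerExp_apply] at h; split_ifs at h with hj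
  · exact hj
  · exact absurd rfl h

lemma pdegM_lowerExp (hp : 1 ≤ p) (i : Fin n) : pdegM p n (lowerExp p i) = p ^ (i : ℕ) - 1 := by
  have hIio : ∑ j ∈ Iio i, p ^ (j : ℕ) = ∑ j ∈ range i, p ^ j := by
    rw [← Nat.Iio_eq_range, ← Fin.map_valEmbedding_Iio, sum_map]; rfl
  calc pdegM p n (lowerExp p i) = (∑ j ∈ range i, p ^ j) * (p - 1) := by
        simp only [pdegM, lowerExp_apply, ite_mul, zero_mul, ← sum_filter, filter_gt_eq_Iio,
          ← hIio, sum_mul]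
        exact sum_congr rfl fun _ _ => mul_comm _ _
    _ = p ^ (i : ℕ) - 1 := geom_sum_mul_of_one_le hp _

lemma isIdempotentElem_eval_lowerExp [Fact p.Prime] (i : Fin n) (x : Pts p n) :
    IsIdempotentElem (eval x (monomial (lowerExp p i) 1)) := by
  rw [eval_monomial, one_mul]
  refine Finset.prod_induction _ _ (fun _ _ ha hb => ha.mul hb) .one fun j _ => ?_
  dsimp only
  rw [lowerExp_apply]
  split_ifs
  · exact ZMod.isIdempotentElem_pow_sub_one (x j)
  · exact pow_zero (x j) ▸ .one

variable (p) in
noncomputable def commExp (Λ : Fin n →₀ ℕ) (i : Fin n) (m : ℕ) : Fin n →₀ ℕ :=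
  lowerExp p i + Finsupp.single i m + Λ.erase i

lemma commExp_apply (Λ : Fin n →₀ ℕ) (i : Fin n) (m : ℕ) (j : Fin n) :
    commExp p Λ i m j = if j < i then p - 1 + Λ j else if j = i then m else Λ j := by
  rcases lt_trichotomy j i with hj | rfl | hj
  · simp [commExp, lowerExp_apply, hj, hj.ne, Finsupp.erase_ne hj.ne]
  · simp [commExp, lowerExp_apply]
  · simp [commExp, lowerExp_apply, hj.not_gt, hj.ne', Finsupp.erase_ne hj.ne']

lemma pdegM_commExp_add_one (hp : 0 < p) (Λ : Fin n →₀ ℕ) (i : Fin n) (m : ℕ) :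
    pdegM p n (commExp p Λ i m) + 1 = (m + 1) * p ^ (i : ℕ) + pdegM p n (Λ.erase i) := by
  have : 0 < p ^ (i : ℕ) := pow_pos hp _
  rw [commExp, pdegM_add, pdegM_add, pdegM_lowerExp hp, pdegM_single, add_one_mul]
  omega

lemma eval_monomial_commExp (Λ : Fin n →₀ ℕ) (i : Fin n) (m : ℕ) (c : ZMod p) (x : Pts p n) :
    eval x (monomial (commExp p Λ i m) c) =
      c * eval x (monomial (lowerExp p i) 1) * x i ^ m * eval x (monomial (Λ.erase i) 1) := by
  rw [commExp, ← mul_one c, ← mul_one (c * 1), ← monomial_mul, ← monomial_mul,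
    ← X_pow_eq_monomial]
  simp only [eval_mul, eval_pow, eval_X, eval_monomial]
  ring

variable (p) in
noncomputable def commPoly (Λ : Fin n →₀ ℕ) (i : Fin n) : MvPolynomial (Fin n) (ZMod p) :=
  ∑ m ∈ range (Λ i), monomial (commExp p Λ i m) (-((Λ i).choose m : ZMod p))

lemma exists_eq_commExp_of_mem_support {Λ : Fin n →₀ ℕ} {i : Fin n} {b : Fin n →₀ ℕ}
    (hb : b ∈ (commPoly p Λ i).support) : ∃ m < Λ i, b = commExp p Λ i m := by
  classical
  obtain ⟨m, hm, hbm⟩ := mem_biUnion.mp (support_sum hb)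
  exact ⟨m, mem_range.mp hm, mem_singleton.mp (support_monomial_subset hbm)⟩

lemma commExp_pred_mem_support_commPoly {Λ : Fin n →₀ ℕ} {i : Fin n} (hpos : Λ i ≠ 0)
    (hlt : Λ i < p) : commExp p Λ i (Λ i - 1) ∈ (commPoly p Λ i).support := by
  have hinj : ∀ m, commExp p Λ i m i = m := fun m => by simp [commExp_apply]
  rw [mem_support_iff, commPoly, coeff_sum, sum_eq_single (Λ i - 1), coeff_monomial, if_pos rfl,
    Nat.choose_symm_of_eq_add (Nat.sub_add_cancel (Nat.one_le_iff_ne_zero.mpr hpos)).symm,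
    Nat.choose_one_right, neg_ne_zero, Ne, ZMod.natCast_eq_zero_iff]
  · exact fun hdvd => hpos (Nat.eq_zero_of_dvd_of_lt hdvd hlt)
  · intro m _ hm
    rw [coeff_monomial, if_neg fun h => hm (by rw [← hinj m, h, hinj])]
  · exact fun h => absurd (mem_range.mpr (by omega)) h

lemma sup_pdegM_support_commPoly_add_one (hp : 0 < p) {Λ : Fin n →₀ ℕ} {i : Fin n}
    (hpos : Λ i ≠ 0) (hlt : Λ i < p) :
    (commPoly p Λ i).support.sup (pdegM p n) + 1 = pdegM p n Λ := by
  have htop := commExp_pred_mem_support_commPoly hpos hlt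
  have hsup : (commPoly p Λ i).support.sup (pdegM p n) =
      pdegM p n (commExp p Λ i (Λ i - 1)) := by
    refine le_antisymm (Finset.sup_le fun b hb => ?_) (le_sup htop)
    obtain ⟨m, hm, rfl⟩ := exists_eq_commExp_of_mem_support hb
    have := pdegM_commExp_add_one hp Λ i m
    have := pdegM_commExp_add_one hp Λ i (Λ i - 1)
    have : (m + 1) * p ^ (i : ℕ) ≤ (Λ i - 1 + 1) * p ^ (i : ℕ) :=
      Nat.mul_le_mul_right _ (by omega)
    omega
  rw [hsup, pdegM_commExp_add_one hp, Nat.sub_add_cancel (Nat.one_le_iff_ne_zero.mpr hpos),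
    pdegM_eq_add_erase Λ i]

lemma eval_commPoly [Fact p.Prime] (Λ : Fin n →₀ ℕ) (i : Fin n) (x : Pts p n) :
    eval x (commPoly p Λ i) = eval x (monomial Λ 1) -
      eval (update x i (x i + eval x (monomial (lowerExp p i) 1))) (monomial Λ 1) := by
  set A := eval x (monomial (lowerExp p i) 1)
  have hR : eval (update x i (x i + A)) (monomial (Λ.erase i) 1) =
      eval x (monomial (Λ.erase i) 1) :=
    eval_monomial_congr 1 fun j hj => update_of_ne (by rintro rfl; simp at hj) _ _
  rw [eval_monomial_eq_pow_mul_erase Λ i, eval_monomial_eq_pow_mul_erase Λ i, hR, update_self,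
    ← sub_mul, ← neg_sub, IsIdempotentElem.add_pow_sub_pow (isIdempotentElem_eval_lowerExp i x),
    commPoly, map_sum, mul_sum, neg_mul, sum_mul, ← sum_neg_distrib]
  refine sum_congr rfl fun m _ => ?_
  rw [eval_monomial_commExp]
  ring

lemma reduced_commPoly {Λ : Fin n →₀ ℕ} {i : Fin n} (hmin : ∀ j < i, Λ j = 0)
    (hr : ∀ j, Λ j ≤ p - 1) : Reduced p n (commPoly p Λ i) := by
  intro b hb j
  obtain ⟨m, hm, rfl⟩ := exists_eq_commExp_of_mem_support hb
  have := hr i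
  rw [commExp_apply]
  split_ifs with hj
  · rw [hmin j hj]; omega
  · omega
  · exact hr j

lemma varsLt_commPoly {Λ : Fin n →₀ ℕ} {i k : Fin n} (hik : i < k)
    (hv : ∀ j, Λ j ≠ 0 → j < k) : VarsLt p n k (commPoly p Λ i) := by
  intro b hb j hj
  obtain ⟨m, -, rfl⟩ := exists_eq_commExp_of_mem_support hb
  rw [commExp_apply] at hj
  split_ifs at hj with hji hji'
  · exact hji.trans hik
  · exact hji' ▸ hik
  · exact hv j hj

end Wreath

theorem exists_commutator_pdeg_pred_general (p n : ℕ) (hp : p.Prime)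
    (Λ : Fin n →₀ ℕ) (k : Fin n) (hr : ∀ j, Λ j ≤ p - 1) (hv : ∀ j, Λ j ≠ 0 → j < k)
    (hΛ : Λ ≠ 0) :
    ∃ (Θ : Fin n →₀ ℕ) (l : Fin n), (∀ j, Θ j ≤ p - 1) ∧ (∀ j, Θ j ≠ 0 → j < l) ∧
      ∃ g : MvPolynomial (Fin n) (ZMod p), Wreath.Reduced p n g ∧ Wreath.VarsLt p n k g ∧
        ⁅Wreath.monoElem p n Λ k, Wreath.monoElem p n Θ l⁆ = Wreath.elt p n g k ∧
        Wreath.pdegP p n g k = Wreath.pdegMk p n Λ k - 1 := by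
  open Wreath in
  have : Fact p.Prime := ⟨hp⟩
  obtain ⟨i, hi, hmin⟩ := Λ.exists_ne_zero_forall_lt_eq_zero hΛ
  have hik : i < k := hv i hi
  refine ⟨lowerExp p i, i, lowerExp_le i, fun _ => lt_of_lowerExp_ne_zero, commPoly p Λ i,
    reduced_commPoly hmin hr, varsLt_commPoly hik hv, ?_, ?_⟩
  · rw [monoElem, monoElem, elt, elt, commutator_delta_delta hik (dependsBelow_eval_monomial hv 1)
      (dependsBelow_eval_monomial (fun _ => lt_of_lowerExp_ne_zero) 1)]
    exact congrArg _ (funext fun x => (eval_commPoly Λ i x).symm)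
  · have := sup_pdegM_support_commPoly_add_one hp.pos hi (Nat.lt_of_le_sub_one hp.pos (hr i))
    rw [pdegP, pdegMk]
    omega

/-- for every monomial element `x^Λ Δₖ` there is a monic monomial element
`w = x^Θ Δⱼ` such that `[x^Λ Δₖ, w]` lies in `B_k` and has `pdeg` exactly one less. -/
theorem exists_commutator_pdeg_pred (p n : ℕ) (hp : p.Prime) (hodd : p ≠ 2)
    (Λ : Fin n →₀ ℕ) (k : Fin n) (hr : ∀ j, Λ j ≤ p - 1) (hv : ∀ j, Λ j ≠ 0 → j < k)
    (hΛ : Λ ≠ 0) :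
    ∃ (Θ : Fin n →₀ ℕ) (l : Fin n), (∀ j, Θ j ≤ p - 1) ∧ (∀ j, Θ j ≠ 0 → j < l) ∧
      ∃ g : MvPolynomial (Fin n) (ZMod p), Wreath.Reduced p n g ∧ Wreath.VarsLt p n k g ∧
        ⁅Wreath.monoElem p n Λ k, Wreath.monoElem p n Θ l⁆ = Wreath.elt p n g k ∧
        Wreath.pdegP p n g k = Wreath.pdegMk p n Λ k - 1 :=
  exists_commutator_pdeg_pred_general p n hp Λ k hr hv hΛ
end

section
/- Let G be a group, A an abelian subgroup, B a normal subgroup of G with A ∩ B trivial, such that AB is normal in G and there exists a subgroup H ≤ N_G(A) with G = H(AB). Then [AB, G] = ([A,G] ∩ A)·[B,G]. -/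
/-!
Write `M = ([A,G] ∩ A)[B,G]`; only `M ⊇ [AB,G]` needs proof. Since `[ab, g] = a[b,g]a⁻¹ · [a,g]`
and `[B,G]` is normal, it suffices that `[a,g] ∈ M` for `a ∈ A`. Writing `g = h a' b` with
`h ∈ H`, the identity `[a, xy] = [a,x] · x[a,y]x⁻¹` splits `[a,g]` into `[a,h]`, which lies in
`[A,G] ∩ A` because `h` normalizes `A`, and a conjugate of `[a, a'b] = a'[a,b]a'⁻¹ ∈ [B,G]`,
where `[a,a'] = 1` because `A` is abelian.
-/

open scoped Pointwise commutatorElement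

namespace Subgroup

variable {G : Type*} [Group G]

theorem commutatorElement_mem_commutator_top_of_mem_right {B : Subgroup G} {b : G} (hb : b ∈ B)
    (a : G) : ⁅a, b⁆ ∈ ⁅B, (⊤ : Subgroup G)⁆ := by
  rw [commutator_comm]
  exact commutator_mem_commutator (mem_top a) hb

theorem commutatorElement_mem_inf_of_mem_normalizer {A : Subgroup G} {a h : G} (ha : a ∈ A)
    (hh : h ∈ normalizer (A : Set G)) : ⁅a, h⁆ ∈ ⁅A, (⊤ : Subgroup G)⁆ ⊓ A := by
  refine ⟨commutator_mem_commutator ha (mem_top h), ?_⟩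
  have hconj : h * a⁻¹ * h⁻¹ ∈ A := (mem_normalizer_iff.mp hh a⁻¹).mp (inv_mem ha)
  rw [commutatorElement_def, mul_assoc, mul_assoc, ← mul_assoc h]
  exact mul_mem ha hconj

theorem conj_commutatorElement_mul_mem_commutator_top {B : Subgroup G} [B.Normal] {a a' b : G}
    (hcomm : Commute a a') (hb : b ∈ B) (x : G) :
    x * ⁅a, a' * b⁆ * x⁻¹ ∈ ⁅B, (⊤ : Subgroup G)⁆ := by
  have hsplit : ⁅a, a' * b⁆ = a' * ⁅a, b⁆ * a'⁻¹ := by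
    rw [commutatorElement_mul_right_eq_mul_conj, commutatorElement_eq_one_iff_commute.mpr hcomm,
      one_mul]
  rw [hsplit]
  have hab := commutatorElement_mem_commutator_top_of_mem_right hb a
  exact (commutator_normal B ⊤).conj_mem _ ((commutator_normal B ⊤).conj_mem _ hab a') x

theorem commutatorElement_mem_of_mem_normalizer_mul {A B : Subgroup G} [B.Normal] {a h a' b : G}
    (ha : a ∈ A) (hh : h ∈ normalizer (A : Set G)) (hcomm : Commute a a') (hb : b ∈ B) :
    ⁅a, h * (a' * b)⁆ ∈ (⁅A, (⊤ : Subgroup G)⁆ ⊓ A) ⊔ ⁅B, (⊤ : Subgroup G)⁆ := by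
  rw [commutatorElement_mul_right_eq_mul_conj, mul_assoc _ h, mul_assoc]
  exact mul_mem (mem_sup_left (commutatorElement_mem_inf_of_mem_normalizer ha hh))
    (mem_sup_right (by simpa only [mul_assoc] using
      conj_commutatorElement_mul_mem_commutator_top hcomm hb h))

end Subgroup

open Subgroup in
theorem commutator_semidirect_general {G : Type*} [Group G] (A B : Subgroup G) (hB : B.Normal)
    (hA : ∀ a ∈ A, ∀ b ∈ A, a * b = b * a)
    (H : Subgroup G) (hH : H ≤ Subgroup.normalizer (A : Set G))
    (hG : ∀ g : G, ∃ h ∈ H, ∃ a ∈ A, ∃ b ∈ B, g = h * (a * b)) :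
    ⁅A ⊔ B, (⊤ : Subgroup G)⁆ = (⁅A, (⊤ : Subgroup G)⁆ ⊓ A) ⊔ ⁅B, (⊤ : Subgroup G)⁆ := by
  have hAG : ∀ a ∈ A, ∀ g : G, ⁅a, g⁆ ∈ (⁅A, (⊤ : Subgroup G)⁆ ⊓ A) ⊔ ⁅B, (⊤ : Subgroup G)⁆ := by
    intro a ha g
    obtain ⟨h, hh, a', ha', b, hb, rfl⟩ := hG g
    exact commutatorElement_mem_of_mem_normalizer_mul ha (hH hh) (hA a ha a' ha') hb
  refine le_antisymm ?_ (sup_le ?_ ?_)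
  · rw [commutator_le]
    intro x hx g _
    obtain ⟨a, ha, b, hb, rfl⟩ : x ∈ (A : Set G) * B := mul_normal A B ▸ hx
    rw [commutatorElement_mul_left_eq_conj_mul]
    exact mul_mem (mem_sup_right ((commutator_normal B ⊤).conj_mem _
      (commutator_mem_commutator hb (mem_top g)) a)) (hAG a ha g)
  · exact inf_le_left.trans (commutator_mono le_sup_left le_rfl)
  · exact commutator_mono le_sup_right le_rfl

/-- if `A` is abelian, `B ⊴ G`, `A ∩ B = 1`, `AB = A ⋉ B ⊴ G` and
`G = H(AB)` for some `H ≤ N_G(A)`, then `[AB, G] = ([A,G] ∩ A)·[B,G]`. -/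
theorem commutator_semidirect {G : Type*} [Group G] (A B : Subgroup G) (hB : B.Normal)
    (hA : ∀ a ∈ A, ∀ b ∈ A, a * b = b * a) (hABtriv : A ⊓ B = ⊥)
    (hN : (A ⊔ B).Normal)
    (H : Subgroup G) (hH : H ≤ Subgroup.normalizer (A : Set G))
    (hG : ∀ g : G, ∃ h ∈ H, ∃ a ∈ A, ∃ b ∈ B, g = h * (a * b)) :
    ⁅A ⊔ B, (⊤ : Subgroup G)⁆ = (⁅A, (⊤ : Subgroup G)⁆ ⊓ A) ⊔ ⁅B, (⊤ : Subgroup G)⁆ :=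
  commutator_semidirect_general A B hB hA H hH hG
end

section
/- Each term of the lower central series of W_n decomposes as the internal product of its intersections with the base subgroups: γ_i(W_n) = (γ_i(W_n) ∩ B_n) ⋊ ... ⋊ (γ_i(W_n) ∩ B_1). -/
open Equiv MvPolynomial

/-!
Forgetting all but the first `m` coordinates of a triangular permutation gives an endomorphism
`ρ_m = truncHom m` of `W_n`, the projection onto `B_1 ⋯ B_m` along `B_{m+1} ⋯ B_n`.
Endomorphisms preserve every `γ_i`, so for `g ∈ γ_i` the factors `ρ_{k+1}(g) ρ_k(g)⁻¹ ∈ B_{k+1}`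
lie in `γ_i`, and they telescope to `ρ_n(g) ρ_0(g)⁻¹ = g`. Conversely, `ρ_m` kills exactly the
factors `c_j` with `j > m` of any factorisation `g = c_n ⋯ c_1` with `c_j ∈ B_j`, which forces
`c_{k+1} = ρ_{k+1}(g) ρ_k(g)⁻¹`.
-/

section ReverseProd

variable {G : Type*}

theorem List.prod_reverse_ofFn_succ [Monoid G] {N : ℕ} (c : Fin (N + 1) → G) :
    (List.ofFn c).reverse.prod =
      c (Fin.last N) * (List.ofFn fun j : Fin N => c j.castSucc).reverse.prod := by
  rw [List.ofFn_succ']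
  simp

theorem List.prod_reverse_ofFn_mul_inv_telescope [Group G] (N : ℕ) (f : ℕ → G) :
    (List.ofFn fun k : Fin N => f (k + 1) * (f k)⁻¹).reverse.prod = f N * (f 0)⁻¹ := by
  induction N with
  | zero => simp
  | succ N ih =>
    rw [List.prod_reverse_ofFn_succ]
    simp only [Fin.val_castSucc, Fin.val_last, ih]
    group

theorem List.prod_reverse_ofFn_ite_lt_succ [Monoid G] {N : ℕ} (c : Fin N → G) (k : Fin N) :
    (List.ofFn fun j : Fin N => if (j : ℕ) < k + 1 then c j else 1).reverse.prod =
      c k * (List.ofFn fun j : Fin N => if (j : ℕ) < k then c j else 1).reverse.prod := by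
  induction N with
  | zero => exact k.elim0
  | succ N ih =>
    rw [List.prod_reverse_ofFn_succ, List.prod_reverse_ofFn_succ]
    induction k using Fin.lastCases with
    | last =>
      have hmask : ∀ j : Fin N, (j : ℕ) < N := fun j => j.isLt
      simp [hmask]
    | cast k =>
      have hlast : ¬ N < (k : ℕ) + 1 := by omega
      simpa [hlast, Nat.not_lt_of_gt k.isLt] using ih (fun j => c j.castSucc) k

end ReverseProd

section Retractions

variable {G : Type*} [Group G] {n : ℕ}

theorem existsUnique_prod_reverse_ofFn_of_retractions (ρ : ℕ → G →* G) (H : Subgroup G)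
    (B : Fin n → Subgroup G) (hH : ∀ m, H.map (ρ m) ≤ H)
    (hρB : ∀ m k, ∀ b ∈ B k, ρ m b = if (k : ℕ) < m then b else 1)
    (hρ_succ_mul_inv : ∀ g (k : Fin n), ρ (k + 1) g * (ρ k g)⁻¹ ∈ B k)
    (hρ_zero : ∀ g, ρ 0 g = 1) (hρ_top : ∀ g, ρ n g = g) :
    ∀ g ∈ H, ∃! c : Fin n → G, (∀ j, c j ∈ H ⊓ B j) ∧ g = (List.ofFn c).reverse.prod := by
  have hρ_prod : ∀ c : Fin n → G, (∀ j, c j ∈ B j) → ∀ m, ρ m (List.ofFn c).reverse.prod =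
      (List.ofFn fun j => if (j : ℕ) < m then c j else 1).reverse.prod := by
    intro c hc m
    simp only [map_list_prod, List.map_reverse, List.map_ofFn, Function.comp_def,
      fun j => hρB m j _ (hc j)]
  intro g hg
  have hρH : ∀ m, ρ m g ∈ H := fun m => hH m ⟨g, hg, rfl⟩
  refine ⟨fun k => ρ (k + 1) g * (ρ k g)⁻¹,
    ⟨fun k => Subgroup.mem_inf.mpr ⟨mul_mem (hρH _) (inv_mem (hρH _)), hρ_succ_mul_inv g k⟩,
      ?_⟩, ?_⟩
  · have := List.prod_reverse_ofFn_mul_inv_telescope n fun m => ρ m g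
    rwa [hρ_top, hρ_zero, inv_one, mul_one, eq_comm] at this
  · rintro c ⟨hc, rfl⟩
    funext k
    rw [hρ_prod c (fun j => (hc j).2), hρ_prod c (fun j => (hc j).2),
      List.prod_reverse_ofFn_ite_lt_succ, mul_inv_cancel_right]

theorem existsUnique_prod_reverse_ofFn_map_subtype (K : Subgroup G) (H : Subgroup K)
    (B : Fin n → Subgroup G) (hB : ∀ j, B j ≤ K)
    (h : ∀ g ∈ H, ∃! c : Fin n → K,
      (∀ j, c j ∈ H ⊓ (B j).comap K.subtype) ∧ g = (List.ofFn c).reverse.prod) :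
    ∀ g ∈ H.map K.subtype, ∃! c : Fin n → G,
      (∀ j, c j ∈ H.map K.subtype ⊓ B j) ∧ g = (List.ofFn c).reverse.prod := by
  have hprod : ∀ c : Fin n → K,
      ((List.ofFn c).reverse.prod : G) = (List.ofFn fun j => (c j : G)).reverse.prod := by
    intro c
    simp only [Subgroup.val_list_prod, List.map_reverse, List.map_ofFn, Function.comp_def]
  rintro _ ⟨g, hg, rfl⟩
  obtain ⟨c, ⟨hcH, rfl⟩, hc_unique⟩ := h g hg
  refine ⟨fun j => c j,
    ⟨fun j => Subgroup.mem_inf.mpr ⟨⟨c j, (hcH j).1, rfl⟩, (hcH j).2⟩, hprod c⟩, ?_⟩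
  rintro d ⟨hd, hd_prod⟩
  let d' : Fin n → K := fun j => ⟨d j, hB j (hd j).2⟩
  have hd'H : ∀ j, d' j ∈ H := by
    intro j
    obtain ⟨h, hh, hh_eq⟩ := (hd j).1
    rwa [show d' j = h from Subtype.ext hh_eq.symm]
  have := hc_unique d' ⟨fun j => ⟨hd'H j, (hd j).2⟩, Subtype.ext (hd_prod.trans (hprod d').symm)⟩
  funext j
  exact congrArg (fun c : Fin n → K => (c j : G)) this

end Retractions

namespace Wreath

variable {p n : ℕ}

theorem Triangular.apply_eq_of_forall_le {σ : Perm (Pts p n)} (hσ : Triangular p n σ)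
    {x y : Pts p n} {j : Fin n} (h : ∀ i ≤ j, x i = y i) : σ x j = σ y j := by
  have := hσ j x y fun i hi => h i hi.le
  rw [h j le_rfl] at this
  exact sub_left_inj.mp this

theorem Triangular.mem_W {π : Perm (Pts p n)} (hπ : Triangular p n π) : π ∈ W p n :=
  ⟨hπ, fun _ _ h => h.elim⟩

theorem B_le_W (k : Fin n) : B p n k ≤ W p n :=
  fun _ hπ => hπ.1.mem_W

def truncPerm (m : ℕ) (π : Perm (Pts p n)) (hπ : Triangular p n π) : Perm (Pts p n) where
  toFun x j := if (j : ℕ) < m then π x j else x j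
  invFun x j := if (j : ℕ) < m then π⁻¹ x j else x j
  left_inv x := by
    funext j
    dsimp only
    split_ifs with hj
    · calc π⁻¹ (fun i => if (i : ℕ) < m then π x i else x i) j = π⁻¹ (π x) j :=
            (hπ.inv p n).apply_eq_of_forall_le fun i hi => if_pos (Nat.lt_of_le_of_lt hi hj)
        _ = x j := by rw [Perm.inv_def, Equiv.symm_apply_apply]
    · rfl
  right_inv x := by
    funext j
    dsimp only
    split_ifs with hj
    · calc π (fun i => if (i : ℕ) < m then π⁻¹ x i else x i) j = π (π⁻¹ x) j :=
            hπ.apply_eq_of_forall_le fun i hi => if_pos (Nat.lt_of_le_of_lt hi hj)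
        _ = x j := by rw [Perm.inv_def, Equiv.apply_symm_apply]
    · rfl

theorem truncPerm_apply (m : ℕ) {π : Perm (Pts p n)} (hπ : Triangular p n π) (x : Pts p n)
    (j : Fin n) : truncPerm m π hπ x j = if (j : ℕ) < m then π x j else x j :=
  rfl

theorem Triangular.truncPerm (m : ℕ) {π : Perm (Pts p n)} (hπ : Triangular p n π) :
    Triangular p n (Wreath.truncPerm m π hπ) := by
  intro k x y h
  simp only [truncPerm_apply]
  split_ifs
  · exact hπ k x y h
  · simp only [sub_self]

theorem truncPerm_mul (m : ℕ) {π σ : Perm (Pts p n)} (hπ : Triangular p n π)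
    (hσ : Triangular p n σ) :
    truncPerm m (π * σ) (hπ.mul p n hσ) = truncPerm m π hπ * truncPerm m σ hσ := by
  ext x j
  simp only [Perm.mul_apply, truncPerm_apply]
  split_ifs with hj
  · exact hπ.apply_eq_of_forall_le fun i hi => by
      rw [truncPerm_apply, if_pos (Nat.lt_of_le_of_lt hi hj)]
  · rfl

def truncHom (m : ℕ) : W p n →* W p n :=
  MonoidHom.mk' (fun π => ⟨truncPerm m π π.2.1, (π.2.1.truncPerm m).mem_W⟩)
    fun π σ => Subtype.ext (truncPerm_mul m π.2.1 σ.2.1)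

theorem coe_truncHom_apply (m : ℕ) (π : W p n) :
    (truncHom m π : Perm (Pts p n)) = truncPerm m π π.2.1 :=
  rfl

theorem truncHom_zero_apply (π : W p n) : truncHom 0 π = 1 := by
  ext x j
  simp [coe_truncHom_apply, truncPerm_apply]

theorem truncHom_self_apply (π : W p n) : truncHom n π = π := by
  ext x j
  simp [coe_truncHom_apply, truncPerm_apply]

theorem truncPerm_of_mem_B (m : ℕ) {k : Fin n} {b : Perm (Pts p n)} (hb : b ∈ B p n k) :
    truncPerm m b hb.1 = if (k : ℕ) < m then b else 1 := by
  ext x j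
  rw [truncPerm_apply]
  split_ifs with hj hk hk
  · rfl
  · exact hb.2 x j fun hjk => hk (hjk ▸ hj)
  · exact (hb.2 x j fun hjk => hj (hjk ▸ hk)).symm
  · rfl

theorem truncHom_apply_of_mem_B (m : ℕ) {k : Fin n} {b : W p n}
    (hb : (b : Perm (Pts p n)) ∈ B p n k) :
    truncHom m b = if (k : ℕ) < m then b else 1 := by
  apply Subtype.ext
  rw [coe_truncHom_apply, truncPerm_of_mem_B m hb]
  split_ifs <;> rfl

theorem truncPerm_succ_mul_inv_mem_B {π : Perm (Pts p n)} (hπ : Triangular p n π) (k : Fin n) :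
    truncPerm (k + 1) π hπ * (truncPerm k π hπ)⁻¹ ∈ B p n k := by
  refine ⟨(hπ.truncPerm _).mul p n ((hπ.truncPerm _).inv p n), fun x j hjk => ?_⟩
  have hinv : ∀ i, (truncPerm k π hπ)⁻¹ x i = if (i : ℕ) < k then π⁻¹ x i else x i :=
    fun _ => rfl
  rw [Perm.mul_apply, truncPerm_apply]
  rcases lt_trichotomy j k with hlt | rfl | hgt
  · rw [if_pos (Nat.lt_succ_of_lt hlt)]
    calc π ((truncPerm k π hπ)⁻¹ x) j = π (π⁻¹ x) j :=
          hπ.apply_eq_of_forall_le fun i hi => by rw [hinv, if_pos (Nat.lt_of_le_of_lt hi hlt)]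
      _ = x j := by rw [Perm.inv_def, Equiv.apply_symm_apply]
  · exact (hjk rfl).elim
  · rw [if_neg (Nat.not_lt_of_ge hgt), hinv, if_neg (Nat.not_lt_of_gt hgt)]

theorem truncHom_succ_mul_inv_mem_B (π : W p n) (k : Fin n) :
    ((truncHom (k + 1) π * (truncHom k π)⁻¹ : W p n) : Perm (Pts p n)) ∈ B p n k :=
  truncPerm_succ_mul_inv_mem_B π.2.1 k

end Wreath

theorem gamma_decomposition_general (p n : ℕ) (i : ℕ) :
    ∀ g ∈ Wreath.gammaP p n i,
      ∃! c : Fin n → Equiv.Perm (Wreath.Pts p n),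
        (∀ j, c j ∈ Wreath.gammaP p n i ⊓ Wreath.B p n j) ∧
        g = (List.ofFn c).reverse.prod :=
  existsUnique_prod_reverse_ofFn_map_subtype _ _ _ Wreath.B_le_W <|
    existsUnique_prod_reverse_ofFn_of_retractions Wreath.truncHom _ _
      (fun _ => (Subgroup.map_lowerCentralSeries _ _ _).trans_le
        (Subgroup.lowerCentralSeries_mono _ le_top))
      (fun m _ _ hb => Wreath.truncHom_apply_of_mem_B m hb)
      Wreath.truncHom_succ_mul_inv_mem_B Wreath.truncHom_zero_apply Wreath.truncHom_self_apply

/-- `γ_i(W_n) = (γ_i(W_n) ∩ B_n) ⋊ ⋯ ⋊ (γ_i(W_n) ∩ B_1)` : every element of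
`γ_i(W_n)` has a unique decomposition as an (ordered) product of elements of the
`γ_i(W_n) ∩ B_j`. -/
theorem gamma_decomposition (p n : ℕ) (hp : p.Prime) (hodd : p ≠ 2)
    (i : ℕ) (hi : 1 ≤ i) :
    ∀ g ∈ Wreath.gammaP p n i,
      ∃! c : Fin n → Equiv.Perm (Wreath.Pts p n),
        (∀ j, c j ∈ Wreath.gammaP p n i ⊓ Wreath.B p n j) ∧
        g = (List.ofFn c).reverse.prod :=
  gamma_decomposition_general p n i
end
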